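/- arXiv:1109.4501 — 2 statements merged into one kernel-verified Lean document; each statement's English description precedes it below -/
import Mathlib

section
/- Let R be a finite irreducible root system with highest root θ, α a long root, and y_α the minimal-length element with y_α(α) = θ. If γ ∈ R⁺ and (γ, θ) = 0, then γ ∉ N(y_α). -/
/-!
If `γ ⊥ θ` were an inversion of `y`, the exchange condition would make `s_γ y` strictly
shorter than `y`. But `s_γ` fixes `θ`, so `s_γ y` still maps `α` to `θ`, contradicting the
minimality of `y`.
-/

open scoped RealInnerProductSpace

/-- Geometric data of a (finite or affine) root system with a choice of
positive and simple roots, inside a real inner product space. -/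
structure RootSystemData (V : Type*) [NormedAddCommGroup V] [InnerProductSpace ℝ V] where
  roots : Set V
  pos : Set V
  simples : Set V
  simples_sub : simples ⊆ pos
  pos_sub : pos ⊆ roots
  ne_zero : ∀ α ∈ roots, α ≠ (0 : V)
  eq_union : roots = pos ∪ (Neg.neg '' pos)
  not_both : ∀ α ∈ pos, -α ∉ pos

namespace RootSystemData

variable {V : Type*} [NormedAddCommGroup V] [InnerProductSpace ℝ V]
  [FiniteDimensional ℝ V]

/-- The orthogonal reflection in the hyperplane orthogonal to `α`. -/
noncomputable def srefl (α : V) : V ≃ₗᵢ[ℝ] V := Submodule.reflection (ℝ ∙ α)ᗮ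

variable (R : RootSystemData V)

/-- The root system data is geometric: simple reflections permute the
positive roots other than the corresponding simple root, and the set of
roots is stable under all reflections in roots. -/
structure IsGeometric : Prop where
  simple_perm : ∀ α ∈ R.simples, ∀ β ∈ R.pos, β ≠ α → srefl α β ∈ R.pos
  refl_stable : ∀ α ∈ R.roots, ∀ β ∈ R.roots, srefl α β ∈ R.roots
  pos_comb : ∀ α ∈ R.pos, α ∈ AddSubmonoid.closure R.simples

/-- The Weyl group: the group generated by the simple reflections. -/
noncomputable def W : Subgroup (V ≃ₗᵢ[ℝ] V) :=
  Subgroup.closure {g | ∃ α ∈ R.simples, g = srefl α}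

/-- The inversion set `N(w) = {α ∈ Δ⁺ ∣ w⁻¹ α ∈ -Δ⁺}`. -/
def N (w : V ≃ₗᵢ[ℝ] V) : Set V := {α | α ∈ R.pos ∧ w⁻¹ α ∈ Neg.neg '' R.pos}

/-- `l` is a word in the simple reflections representing `w`. -/
noncomputable def IsWord (l : List V) (w : V ≃ₗᵢ[ℝ] V) : Prop :=
  (∀ α ∈ l, α ∈ R.simples) ∧ w = (l.map srefl).prod

/-- The length of `w` : the least length of a word in the simple reflections
representing `w`. -/
noncomputable def length (w : V ≃ₗᵢ[ℝ] V) : ℕ :=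
  sInf {n | ∃ l : List V, R.IsWord l w ∧ l.length = n}

/-- A reduced expression. -/
noncomputable def IsReduced (l : List V) (w : V ≃ₗᵢ[ℝ] V) : Prop :=
  R.IsWord l w ∧ l.length = R.length w

/-- The (left) weak Bruhat order: some reduced expression of `w₁` is an
initial segment of a reduced expression of `w₂`. -/
noncomputable def weakLE (w₁ w₂ : V ≃ₗᵢ[ℝ] V) : Prop :=
  ∃ l₁ l₂ : List V, R.IsReduced l₁ w₁ ∧ R.IsReduced (l₁ ++ l₂) w₂

end RootSystemData

namespace RootSystemData

variable {V : Type*} [NormedAddCommGroup V] [InnerProductSpace ℝ V]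

theorem srefl_apply_of_inner_eq_zero {a v : V} (h : ⟪a, v⟫ = 0) : srefl a v = v :=
  Submodule.reflection_mem_subspace_eq_self <|
    Submodule.mem_orthogonal_singleton_iff_inner_right.2 h

theorem srefl_inv (a : V) : (srefl a)⁻¹ = srefl a :=
  Submodule.reflection_inv

theorem srefl_mul_self (a : V) : srefl a * srefl a = 1 :=
  Submodule.reflection_mul_reflection _

theorem srefl_map (w : V ≃ₗᵢ[ℝ] V) (a : V) : srefl (w a) = w * srefl a * w⁻¹ := by
  have hspan : (ℝ ∙ w a)ᗮ = ((ℝ ∙ a)ᗮ).map (w.toLinearEquiv : V →ₗ[ℝ] V) := by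
    rw [Submodule.map_orthogonal_equiv, Submodule.map_span]
    simp
  ext v
  simp [srefl, hspan, Submodule.reflection_map_apply]

variable {R : RootSystemData V}

theorem isWord_nil : R.IsWord [] 1 :=
  ⟨by simp, by simp⟩

theorem IsWord.cons {a : V} {l : List V} {w : V ≃ₗᵢ[ℝ] V} (ha : a ∈ R.simples)
    (hl : R.IsWord l w) : R.IsWord (a :: l) (srefl a * w) :=
  ⟨List.forall_mem_cons.2 ⟨ha, hl.1⟩, by rw [hl.2, List.map_cons, List.prod_cons]⟩

theorem IsWord.mem_W {l : List V} {w : V ≃ₗᵢ[ℝ] V} (hl : R.IsWord l w) : w ∈ R.W := by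
  rw [hl.2]
  refine Subgroup.list_prod_mem _ fun g hg => ?_
  obtain ⟨a, ha, rfl⟩ := List.mem_map.1 hg
  exact Subgroup.subset_closure ⟨a, hl.1 a ha, rfl⟩

theorem IsWord.length_le {l : List V} {w : V ≃ₗᵢ[ℝ] V} (hl : R.IsWord l w) :
    R.length w ≤ l.length :=
  Nat.sInf_le ⟨l, hl, rfl⟩

theorem exists_isWord_of_mem_W {w : V ≃ₗᵢ[ℝ] V} (hw : w ∈ R.W) : ∃ l, R.IsWord l w := by
  induction hw using Subgroup.closure_induction with
  | mem g hg =>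
    obtain ⟨a, ha, rfl⟩ := hg
    exact ⟨[a], by simpa using ha, by simp⟩
  | one => exact ⟨[], isWord_nil⟩
  | mul x y _ _ hx hy =>
    obtain ⟨l₁, hl₁⟩ := hx
    obtain ⟨l₂, hl₂⟩ := hy
    exact ⟨l₁ ++ l₂, fun a ha => (List.mem_append.1 ha).elim (hl₁.1 a) (hl₂.1 a),
      by rw [List.map_append, List.prod_append, ← hl₁.2, ← hl₂.2]⟩
  | inv x _ hx =>
    obtain ⟨l, hl⟩ := hx
    refine ⟨l.reverse, fun a ha => hl.1 a (List.mem_reverse.1 ha), ?_⟩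
    rw [hl.2, List.prod_inv_reverse, List.map_reverse, List.map_map]
    simp [Function.comp_def, srefl_inv]

theorem exists_isReduced_of_mem_W {w : V ≃ₗᵢ[ℝ] V} (hw : w ∈ R.W) : ∃ l, R.IsReduced l w := by
  obtain ⟨l, hl⟩ := exists_isWord_of_mem_W hw
  obtain ⟨l', hl', hlen⟩ : R.length w ∈ {n | ∃ l, R.IsWord l w ∧ l.length = n} :=
    Nat.sInf_mem ⟨l.length, l, hl, rfl⟩
  exact ⟨l', hl', hlen⟩

/-- The exchange condition. If `γ` is not the first letter `a`, then `s_a γ` is a positive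
inversion of the rest of the word, and `s_{s_a γ} = s_a s_γ s_a`. -/
theorem IsWord.exists_isWord_srefl_mul (hR : R.IsGeometric) {l : List V} {w : V ≃ₗᵢ[ℝ] V}
    (hl : R.IsWord l w) {γ : V} (hγ : γ ∈ R.N w) :
    ∃ l', R.IsWord l' (srefl γ * w) ∧ l'.length + 1 = l.length := by
  induction l generalizing w γ with
  | nil =>
    obtain ⟨hγpos, δ, hδ, hδγ⟩ := hγ
    rw [hl.2] at hδγ
    simp only [List.map_nil, List.prod_nil, inv_one, LinearIsometryEquiv.coe_one, id] at hδγ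
    exact (R.not_both γ hγpos (by rwa [← hδγ, neg_neg])).elim
  | cons a l ih =>
    obtain ⟨hs, rfl⟩ := hl
    have ha : a ∈ R.simples := hs a List.mem_cons_self
    have hl : R.IsWord l (l.map srefl).prod :=
      ⟨fun b hb => hs b (List.mem_cons_of_mem a hb), rfl⟩
    simp only [List.map_cons, List.prod_cons] at hγ ⊢
    by_cases hγa : γ = a
    · subst hγa
      exact ⟨l, by rwa [← mul_assoc, srefl_mul_self, one_mul], rfl⟩
    · have hγ' : srefl a γ ∈ R.N (l.map srefl).prod := by
        refine ⟨hR.simple_perm a ha γ hγ.1 hγa, ?_⟩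
        simpa [mul_inv_rev, srefl_inv] using hγ.2
      obtain ⟨l', hl', hlen⟩ := ih hl hγ'
      refine ⟨a :: l', ?_, by simp [hlen]⟩
      convert hl'.cons ha using 1
      rw [srefl_map, srefl_inv]
      simp only [← mul_assoc, srefl_mul_self, one_mul]

theorem srefl_mul_mem_W (hR : R.IsGeometric) {w : V ≃ₗᵢ[ℝ] V} (hw : w ∈ R.W) {γ : V}
    (hγ : γ ∈ R.N w) : srefl γ * w ∈ R.W := by
  obtain ⟨l, hl⟩ := exists_isWord_of_mem_W hw
  obtain ⟨l', hl', -⟩ := hl.exists_isWord_srefl_mul hR hγ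
  exact hl'.mem_W

theorem length_srefl_mul_lt (hR : R.IsGeometric) {w : V ≃ₗᵢ[ℝ] V} (hw : w ∈ R.W) {γ : V}
    (hγ : γ ∈ R.N w) : R.length (srefl γ * w) < R.length w := by
  obtain ⟨l, hl, hlen⟩ := exists_isReduced_of_mem_W hw
  obtain ⟨l', hl', hlen'⟩ := hl.exists_isWord_srefl_mul hR hγ
  have := hl'.length_le
  omega

end RootSystemData

open RootSystemData
open scoped RealInnerProductSpace

variable {V : Type*} [NormedAddCommGroup V] [InnerProductSpace ℝ V] [FiniteDimensional ℝ V]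

theorem orthogonal_to_highest_not_inversion_general (R : RootSystemData V) (hR : R.IsGeometric)
    (θ : V) (α : V) (y : V ≃ₗᵢ[ℝ] V) (hy : y ∈ R.W ∧ y α = θ ∧
      ∀ z : V ≃ₗᵢ[ℝ] V, z ∈ R.W → z α = θ → R.length y ≤ R.length z)
    (γ : V) (hperp : ⟪γ, θ⟫ = 0) : γ ∉ R.N y := by
  intro hγ
  obtain ⟨hyW, hyα, hymin⟩ := hy
  have hfix : (srefl γ * y) α = θ := by
    rw [LinearIsometryEquiv.coe_mul, Function.comp_apply, hyα, srefl_apply_of_inner_eq_zero hperp]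
  exact (hymin _ (srefl_mul_mem_W hR hyW hγ) hfix).not_gt (length_srefl_mul_lt hR hyW hγ)

/-- if `γ ∈ R⁺` and `(γ, θ) = 0` then `γ ∉ N(y_α)`. -/
theorem orthogonal_to_highest_not_inversion (R : RootSystemData V) (hR : R.IsGeometric)
    (hfin : R.roots.Finite)
    (hcrys : ∀ α ∈ R.roots, ∀ β ∈ R.roots, ∃ n : ℤ, 2 * ⟪α, β⟫ / ⟪α, α⟫ = (n : ℝ))
    (hirr : ∀ S₁ S₂ : Set V, R.simples = S₁ ∪ S₂ →
      (∀ a ∈ S₁, ∀ b ∈ S₂, ⟪a, b⟫ = 0) → S₁ = ∅ ∨ S₂ = ∅)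
    (θ : V) (hθpos : θ ∈ R.pos)
    (hθhigh : ∀ α ∈ R.roots, θ - α ∈ AddSubmonoid.closure R.simples)
    (α : V) (hα : α ∈ R.roots) (hlong : ∀ β ∈ R.roots, ‖β‖ ≤ ‖α‖)
    (y : V ≃ₗᵢ[ℝ] V) (hy : y ∈ R.W ∧ y α = θ ∧
      ∀ z : V ≃ₗᵢ[ℝ] V, z ∈ R.W → z α = θ → R.length y ≤ R.length z)
    (γ : V) (hγ : γ ∈ R.pos) (hperp : ⟪γ, θ⟫ = 0) : γ ∉ R.N y :=
  orthogonal_to_highest_not_inversion_general R hR θ α y hy γ hperp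
end

section
/- Let R be a finite irreducible root system, θ its highest root, and suppose y ∈ W(R) satisfies: θ ∉ N(y), and for every pair β₁, β₂ ∈ R⁺ with β₁ + β₂ = θ exactly one of β₁, β₂ lies in N(y). Then there exists a long simple root β such that y(β) = θ. -/
open scoped RealInnerProductSpace

open RootSystemData
open scoped RealInnerProductSpace

variable {V : Type*} [NormedAddCommGroup V] [InnerProductSpace ℝ V] [FiniteDimensional ℝ V]

/-!
Put `β = y⁻¹ θ`: it is a positive root (as `θ ∉ N(y)`) of the same length as `θ`. If `β` were
not simple, some simple root `s` would satisfy `⟪β, s⟫ > 0`, and then `β - s` would be a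
positive root by the crystallographic condition. Then `θ = y (β - s) + y s` splits `θ` into two
roots, both positive because `θ` is highest, and neither in `N(y)` because `β - s` and `s` are
positive: this contradicts the hypothesis on decompositions of `θ`. Positivity of roots is
detected by the sign of `⟪ρ, ·⟫`, where `ρ` is the sum of the positive roots.
-/

namespace RootSystemData

variable {V : Type*} [NormedAddCommGroup V] [InnerProductSpace ℝ V]

theorem exists_mem_inner_pos_of_mem_closure {S : Set V} {v x : V}
    (hx : x ∈ AddSubmonoid.closure S) (hvx : 0 < ⟪v, x⟫) : ∃ s ∈ S, 0 < ⟪v, s⟫ := by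
  induction hx using AddSubmonoid.closure_induction with
  | mem s hs => exact ⟨s, hs, hvx⟩
  | zero => simp at hvx
  | add a b _ _ ha hb =>
    rw [inner_add_right] at hvx
    rcases lt_or_ge 0 ⟪v, a⟫ with h | h
    · exact ha h
    · exact hb (by linarith)

theorem eq_one_or_eq_one_of_inner_pos {α β : V} {n m : ℤ}
    (hn : 2 * ⟪α, β⟫ / ⟪α, α⟫ = n) (hm : 2 * ⟪β, α⟫ / ⟪β, β⟫ = m)
    (hpos : 0 < ⟪α, β⟫) (hlt : ⟪α, β⟫ < ‖α‖ * ‖β‖) : n = 1 ∨ m = 1 := by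
  have hα : 0 < ⟪α, α⟫ := real_inner_self_pos.2 (by rintro rfl; simp at hpos)
  have hβ : 0 < ⟪β, β⟫ := real_inner_self_pos.2 (by rintro rfl; simp at hpos)
  rw [real_inner_comm] at hm
  have hn0 : (0 : ℝ) < n := hn ▸ by positivity
  have hm0 : (0 : ℝ) < m := hm ▸ by positivity
  have hnm : (n * m : ℝ) < 4 := by
    rw [← hn, ← hm, div_mul_div_comm, div_lt_iff₀ (by positivity)]
    nlinarith [real_inner_self_eq_norm_mul_norm α, real_inner_self_eq_norm_mul_norm β]
  have : (0 : ℤ) < n := by exact_mod_cast hn0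
  have : (0 : ℤ) < m := by exact_mod_cast hm0
  have : n * m < 4 := by exact_mod_cast hnm
  by_contra! h
  have : 2 ≤ n := by omega
  have : 2 ≤ m := by omega
  nlinarith

variable {R : RootSystemData V}

theorem neg_mem_roots {α : V} (hα : α ∈ R.roots) : -α ∈ R.roots := by
  rw [R.eq_union] at hα ⊢
  rcases hα with h | ⟨q, hq, rfl⟩
  · exact Or.inr ⟨α, h, rfl⟩
  · exact Or.inl (by simpa using hq)

theorem apply_notMem_N {w : V ≃ₗᵢ[ℝ] V} {α : V} (hα : α ∈ R.pos) : w α ∉ R.N w := by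
  rintro ⟨-, q, hq, hqα⟩
  rw [LinearIsometryEquiv.coe_inv, LinearIsometryEquiv.symm_apply_apply] at hqα
  exact R.not_both α hα (by simpa [← hqα] using hq)

theorem eq_zero_or_inner_pos {ρ : V} (hρ : ∀ s ∈ R.simples, 0 < ⟪ρ, s⟫) {x : V}
    (hx : x ∈ AddSubmonoid.closure R.simples) : x = 0 ∨ 0 < ⟪ρ, x⟫ := by
  induction hx using AddSubmonoid.closure_induction with
  | mem s hs => exact Or.inr (hρ s hs)
  | zero => exact Or.inl rfl
  | add a b _ _ ha hb =>
    rcases ha with rfl | ha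
    · simpa using hb
    rcases hb with rfl | hb
    · exact Or.inr (by simpa using ha)
    exact Or.inr (by rw [inner_add_right]; positivity)

theorem srefl_apply (α x : V) : srefl α x = x - (2 * ⟪α, x⟫ / ⟪α, α⟫) • α := by
  rw [srefl, Submodule.reflection_orthogonal_apply, Submodule.reflection_singleton_apply,
    real_inner_self_eq_norm_sq, neg_sub, two_smul, ← add_smul]
  norm_num
  congr 1
  ring

theorem srefl_self (α : V) : srefl α α = -α :=
  Submodule.reflection_orthogonalComplement_singleton_eq_neg α

theorem srefl_srefl (α x : V) : srefl α (srefl α x) = x :=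
  Submodule.reflection_reflection _ x

theorem inner_srefl_self (α x : V) : ⟪srefl α x, α⟫ = -⟪x, α⟫ := by
  rw [← (srefl α).inner_map_map, srefl_srefl, srefl_self, inner_neg_right]

namespace IsGeometric

variable (hR : R.IsGeometric)
include hR

theorem apply_mem_roots {w : V ≃ₗᵢ[ℝ] V} (hw : w ∈ R.W) {α : V} (hα : α ∈ R.roots) :
    w α ∈ R.roots := by
  induction hw using Subgroup.closure_induction'' generalizing α with
  | mem g hg | inv_mem g hg =>
    obtain ⟨s, hs, rfl⟩ := hg
    exact hR.refl_stable s (R.pos_sub (R.simples_sub hs)) α hα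
  | one => exact hα
  | mul g h _ _ hg hh => exact hg (hh hα)

theorem srefl_mem_pos_and_ne {s α : V} (hs : s ∈ R.simples) (hα : α ∈ R.pos) (hαs : α ≠ s) :
    srefl s α ∈ R.pos ∧ srefl s α ≠ s := by
  refine ⟨hR.simple_perm s hs α hα hαs, fun h => R.not_both s (R.simples_sub hs) ?_⟩
  rwa [← srefl_srefl s α, h, srefl_self] at hα

theorem exists_inner_simple_pos (hfin : R.roots.Finite) :
    ∃ ρ : V, ∀ s ∈ R.simples, 0 < ⟪ρ, s⟫ := by
  classical
  set P := (hfin.subset R.pos_sub).toFinset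
  refine ⟨∑ α ∈ P, α, fun s hs => ?_⟩
  have hsP : s ∈ P := by simpa [P] using R.simples_sub hs
  have hmaps : ∀ α ∈ P.erase s, srefl s α ∈ P.erase s := by
    intro α hα
    simp only [Finset.mem_erase, P, Set.Finite.mem_toFinset] at hα ⊢
    exact (hR.srefl_mem_pos_and_ne hs hα.2 hα.1).symm
  have hperm : ∑ α ∈ P.erase s, srefl s α = ∑ α ∈ P.erase s, α :=
    Finset.sum_nbij' (srefl s) (srefl s) hmaps hmaps (fun α _ => srefl_srefl s α)
      (fun α _ => srefl_srefl s α) (fun _ _ => rfl)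
  have hρ : srefl s (∑ α ∈ P, α) = ∑ α ∈ P, α - (2 : ℝ) • s := by
    rw [map_sum, ← Finset.add_sum_erase _ _ hsP, ← Finset.add_sum_erase _ _ hsP, srefl_self,
      hperm, two_smul]
    abel
  -- pairing `srefl s ρ = ρ - 2 s` with `s` gives `⟪ρ, s⟫ = ⟪s, s⟫`
  have h := inner_srefl_self s (∑ α ∈ P, α)
  rw [hρ, inner_sub_left, real_inner_smul_left] at h
  have hs0 : s ≠ 0 := R.ne_zero s (R.pos_sub (R.simples_sub hs))
  linarith [real_inner_self_pos.2 hs0]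

theorem sub_mem_roots_of_inner_pos
    (hcrys : ∀ α ∈ R.roots, ∀ β ∈ R.roots, ∃ n : ℤ, 2 * ⟪α, β⟫ / ⟪α, α⟫ = (n : ℝ))
    {α β : V} (hα : α ∈ R.roots) (hβ : β ∈ R.roots) (hpos : 0 < ⟪α, β⟫)
    (hlt : ⟪α, β⟫ < ‖α‖ * ‖β‖) : β - α ∈ R.roots := by
  obtain ⟨n, hn⟩ := hcrys α hα β hβ
  obtain ⟨m, hm⟩ := hcrys β hβ α hα
  rcases eq_one_or_eq_one_of_inner_pos hn hm hpos hlt with rfl | rfl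
  · have := hR.refl_stable α hα β hβ
    rwa [srefl_apply, hn, Int.cast_one, one_smul] at this
  · have := neg_mem_roots (hR.refl_stable β hβ α hα)
    rwa [srefl_apply, hm, Int.cast_one, one_smul, neg_sub] at this

theorem inner_lt_norm_mul_norm {s β : V} (hs : s ∈ R.simples) (hβ : β ∈ R.pos) (hβs : β ≠ s) :
    ⟪s, β⟫ < ‖s‖ * ‖β‖ := by
  refine (real_inner_le_norm s β).lt_of_ne fun h => R.not_both β hβ ?_
  have hs0 : ‖s‖ ≠ 0 := norm_ne_zero_iff.2 (R.ne_zero s (R.pos_sub (R.simples_sub hs)))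
  have hβeq : β = (‖β‖ / ‖s‖) • s := by
    rw [div_eq_inv_mul, mul_smul, (inner_eq_norm_mul_iff_real.1 h), smul_smul,
      inv_mul_cancel₀ hs0, one_smul]
  have := hR.simple_perm s hs β hβ hβs
  rwa [hβeq, map_smul, srefl_self, smul_neg, ← hβeq] at this

section Positivity

variable {ρ : V} (hρ : ∀ s ∈ R.simples, 0 < ⟪ρ, s⟫)
include hρ

theorem inner_pos_of_mem_pos {α : V} (hα : α ∈ R.pos) : 0 < ⟪ρ, α⟫ :=
  (eq_zero_or_inner_pos hρ (hR.pos_comb α hα)).resolve_left (R.ne_zero α (R.pos_sub hα))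

theorem mem_pos_of_inner_nonneg {α : V} (hα : α ∈ R.roots) (hρα : 0 ≤ ⟪ρ, α⟫) : α ∈ R.pos := by
  rcases R.eq_union ▸ hα with h | ⟨q, hq, rfl⟩
  · exact h
  · rw [inner_neg_right] at hρα
    linarith [hR.inner_pos_of_mem_pos hρ hq]

theorem mem_pos_of_add_eq_highest {θ : V}
    (hθhigh : ∀ α ∈ R.roots, θ - α ∈ AddSubmonoid.closure R.simples)
    {α β : V} (hα : α ∈ R.roots) (hβ : β ∈ R.roots) (hαβ : α + β = θ) : α ∈ R.pos := by
  refine hR.mem_pos_of_inner_nonneg hρ hα ?_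
  rcases eq_zero_or_inner_pos hρ (hθhigh β hβ) with h | h <;>
    rw [← hαβ, add_sub_cancel_right] at h
  · simp [h]
  · exact h.le

theorem exists_sub_simple_mem_pos
    (hcrys : ∀ α ∈ R.roots, ∀ β ∈ R.roots, ∃ n : ℤ, 2 * ⟪α, β⟫ / ⟪α, α⟫ = (n : ℝ))
    {β : V} (hβ : β ∈ R.pos) (hβs : β ∉ R.simples) : ∃ s ∈ R.simples, β - s ∈ R.pos := by
  have hβ0 : β ≠ 0 := R.ne_zero β (R.pos_sub hβ)
  obtain ⟨s, hs, hinner⟩ :=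
    exists_mem_inner_pos_of_mem_closure (hR.pos_comb β hβ) (real_inner_self_pos.2 hβ0)
  have hsβ : β ≠ s := by rintro rfl; exact hβs hs
  have hroot : β - s ∈ R.roots :=
    hR.sub_mem_roots_of_inner_pos hcrys (R.pos_sub (R.simples_sub hs)) (R.pos_sub hβ)
      (by rwa [real_inner_comm]) (hR.inner_lt_norm_mul_norm hs hβ hsβ)
  refine ⟨s, hs, ?_⟩
  rcases R.eq_union ▸ hroot with h | ⟨q, hq, hqβ⟩
  · exact h
  -- otherwise `s - β` is positive, and so is its reflection `-(s + srefl s β)`: impossible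
  exfalso
  have hqs : q ≠ s := by
    rintro rfl
    rw [eq_sub_iff_add_eq, neg_add_cancel] at hqβ
    exact hβ0 hqβ.symm
  have hreflq := hR.inner_pos_of_mem_pos hρ (hR.simple_perm s hs q hq hqs)
  have hreflβ := hR.inner_pos_of_mem_pos hρ (hR.simple_perm s hs β hβ hsβ)
  have hq : q = s - β := by rw [← neg_sub, ← hqβ, neg_neg]
  rw [hq, map_sub, srefl_self, inner_sub_right, inner_neg_right] at hreflq
  linarith [hρ s hs]

end Positivity

end IsGeometric

end RootSystemData

theorem exists_long_simple_to_highest_general (R : RootSystemData V) (hR : R.IsGeometric)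
    (hfin : R.roots.Finite)
    (hcrys : ∀ α ∈ R.roots, ∀ β ∈ R.roots, ∃ n : ℤ, 2 * ⟪α, β⟫ / ⟪α, α⟫ = (n : ℝ))
    (θ : V) (hθpos : θ ∈ R.pos)
    (hθhigh : ∀ α ∈ R.roots, θ - α ∈ AddSubmonoid.closure R.simples)
    (y : V ≃ₗᵢ[ℝ] V) (hy : y ∈ R.W) (hθnot : θ ∉ R.N y)
    (hpairs : ∀ β₁ β₂ : V, β₁ ∈ R.pos → β₂ ∈ R.pos → β₁ + β₂ = θ →
      Xor' (β₁ ∈ R.N y) (β₂ ∈ R.N y)) :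
    ∃ β ∈ R.simples, ‖β‖ = ‖θ‖ ∧ y β = θ := by
  obtain ⟨ρ, hρ⟩ := hR.exists_inner_simple_pos hfin
  set β := y⁻¹ θ
  have hyβ : y β = θ := by simp [β]
  have hβ : β ∈ R.pos := by
    rcases R.eq_union ▸ hR.apply_mem_roots (R.W.inv_mem hy) (R.pos_sub hθpos) with h | h
    · exact h
    · exact absurd ⟨hθpos, h⟩ hθnot
  refine ⟨β, ?_, by rw [← hyβ, y.norm_map], hyβ⟩
  by_contra hβs
  obtain ⟨s, hs, hγ⟩ := hR.exists_sub_simple_mem_pos hρ hcrys hβ hβs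
  have hsum : y (β - s) + y s = θ := by rw [← map_add, sub_add_cancel, hyβ]
  have hroot₁ := hR.apply_mem_roots hy (R.pos_sub hγ)
  have hroot₂ := hR.apply_mem_roots hy (R.pos_sub (R.simples_sub hs))
  rcases hpairs _ _ (hR.mem_pos_of_add_eq_highest hρ hθhigh hroot₁ hroot₂ hsum)
      (hR.mem_pos_of_add_eq_highest hρ hθhigh hroot₂ hroot₁ (by rwa [add_comm]))
      hsum with ⟨h, -⟩ | ⟨h, -⟩
  · exact apply_notMem_N hγ h
  · exact apply_notMem_N (R.simples_sub hs) h

/-- if `θ ∉ N(y)` and exactly one summand of every decomposition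
`β₁ + β₂ = θ` lies in `N(y)`, then `y(β) = θ` for some long simple root `β`. -/
theorem exists_long_simple_to_highest (R : RootSystemData V) (hR : R.IsGeometric)
    (hfin : R.roots.Finite)
    (hcrys : ∀ α ∈ R.roots, ∀ β ∈ R.roots, ∃ n : ℤ, 2 * ⟪α, β⟫ / ⟪α, α⟫ = (n : ℝ))
    (hirr : ∀ S₁ S₂ : Set V, R.simples = S₁ ∪ S₂ →
      (∀ a ∈ S₁, ∀ b ∈ S₂, ⟪a, b⟫ = 0) → S₁ = ∅ ∨ S₂ = ∅)
    (θ : V) (hθpos : θ ∈ R.pos)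
    (hθhigh : ∀ α ∈ R.roots, θ - α ∈ AddSubmonoid.closure R.simples)
    (y : V ≃ₗᵢ[ℝ] V) (hy : y ∈ R.W) (hθnot : θ ∉ R.N y)
    (hpairs : ∀ β₁ β₂ : V, β₁ ∈ R.pos → β₂ ∈ R.pos → β₁ + β₂ = θ →
      Xor' (β₁ ∈ R.N y) (β₂ ∈ R.N y)) :
    ∃ β ∈ R.simples, ‖β‖ = ‖θ‖ ∧ y β = θ :=
  exists_long_simple_to_highest_general R hR hfin hcrys θ hθpos hθhigh y hy hθnot hpairs
end
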